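/- arXiv:2110.04417 — 6 statements merged into one kernel-verified Lean document; each statement's English description precedes it below -/
import Mathlib

section
/- Let k ≥ 4 be an even natural number and let t be a real number with −1 ≤ t < 0. Then the function f_t : ℝ² → ℝ defined by f_t(x,y) = x²y + 2t·x² + y^(k−1) − t·y has no critical points; that is, the system 2x(y + 2t) = 0, x² + (k−1)·y^(k−2) − t = 0 has no real solution (x,y). -/
lemma no_sol_aux (k : ℕ) (hk : 4 ≤ k) (hke : Even k) (t : ℝ) (ht : -1 ≤ t)
    (ht0 : t < 0) :
    ¬∃ x y : ℝ,
      2 * x * (y + 2 * t) = 0 ∧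
      x ^ 2 + ((k : ℝ) - 1) * y ^ (k - 2) - t = 0 := by
  rintro ⟨x, y, h1, h2⟩
  have hk4 : (4 : ℝ) ≤ (k : ℝ) := by exact_mod_cast hk
  have hke2 : Even (k - 2) := hke.tsub (by decide)
  rcases mul_eq_zero.mp h1 with h | h
  · have hx : x = 0 := by
      rcases mul_eq_zero.mp h with h' | h'
      · norm_num at h'
      · exact h'
    have hyp : (0 : ℝ) ≤ y ^ (k - 2) := hke2.pow_nonneg y
    nlinarith
  · have hy : y = -2 * t := by linarith
    have hy0 : 0 ≤ y := by rw [hy]; linarith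
    have hyp : (0 : ℝ) ≤ y ^ (k - 2) := pow_nonneg hy0 _
    nlinarith [sq_nonneg x]

/-- For `k ≥ 4` even and `-1 ≤ t < 0`, the morsification
`f_t (x,y) = x^2*y + 2*t*x^2 + y^(k-1) - t*y` of the `D_k^+` curve
singularity has no critical points; equivalently the system
`2x(y + 2t) = 0`, `x^2 + (k-1)*y^(k-2) - t = 0` has no real solution. -/
theorem stmt_7 (k : ℕ) (hk : 4 ≤ k) (hke : Even k) (t : ℝ) (ht : -1 ≤ t)
    (ht0 : t < 0) :
    (∀ p : ℝ × ℝ,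
      fderiv ℝ (fun q : ℝ × ℝ =>
        q.1 ^ 2 * q.2 + 2 * t * q.1 ^ 2 + q.2 ^ (k - 1) - t * q.2) p ≠ 0) ∧
    ¬∃ x y : ℝ,
      2 * x * (y + 2 * t) = 0 ∧
      x ^ 2 + ((k : ℝ) - 1) * y ^ (k - 2) - t = 0 := by
  have nosol := no_sol_aux k hk hke t ht ht0
  refine ⟨?_, nosol⟩
  intro p hD
  set f : ℝ × ℝ → ℝ := fun q : ℝ × ℝ =>
    q.1 ^ 2 * q.2 + 2 * t * q.1 ^ 2 + q.2 ^ (k - 1) - t * q.2 with hf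
  have hdiff : DifferentiableAt ℝ f p := by fun_prop
  have hfd : HasFDerivAt f (fderiv ℝ f p) p := hdiff.hasFDerivAt
  -- x-direction
  have hgx : HasDerivAt (fun s : ℝ => (s, p.2)) ((1 : ℝ), (0 : ℝ)) p.1 :=
    HasDerivAt.prodMk (hasDerivAt_id p.1) (hasDerivAt_const _ _)
  have hcx : HasDerivAt (fun s : ℝ => f (s, p.2))
      (fderiv ℝ f p ((1 : ℝ), (0 : ℝ))) p.1 := HasFDerivAt.comp_hasDerivAt (l := f) p.1 hfd hgx
  have h2 : HasDerivAt (fun s : ℝ => s ^ 2) (2 * p.1) p.1 := by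
    simpa using hasDerivAt_pow 2 p.1
  have hcx' : HasDerivAt (fun s : ℝ => f (s, p.2))
      (2 * p.1 * p.2 + 2 * t * (2 * p.1)) p.1 := by
    have := (((h2.mul_const p.2).add (h2.const_mul (2 * t))).add_const
      (p.2 ^ (k - 1))).sub_const (t * p.2)
    refine (this.congr_deriv (by ring)).congr_of_eventuallyEq (Filter.Eventually.of_forall fun s => ?_)
    simp only [hf, Pi.add_apply, Pi.sub_apply, id]
  have eq1 : 2 * p.1 * p.2 + 2 * t * (2 * p.1) = 0 := by
    have := hcx.unique hcx'
    rw [hD] at this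
    simpa using this.symm
  -- y-direction
  have hgy : HasDerivAt (fun s : ℝ => (p.1, s)) ((0 : ℝ), (1 : ℝ)) p.2 :=
    HasDerivAt.prodMk (hasDerivAt_const _ _) (hasDerivAt_id p.2)
  have hcy : HasDerivAt (fun s : ℝ => f (p.1, s))
      (fderiv ℝ f p ((0 : ℝ), (1 : ℝ))) p.2 := HasFDerivAt.comp_hasDerivAt (l := f) p.2 hfd hgy
  have hpk : HasDerivAt (fun s : ℝ => s ^ (k - 1))
      (((k : ℝ) - 1) * p.2 ^ (k - 2)) p.2 := by
    have := hasDerivAt_pow (k - 1) p.2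
    have h1k : (1 : ℕ) ≤ k := by omega
    have hcast : ((k - 1 : ℕ) : ℝ) = (k : ℝ) - 1 := by
      push_cast [h1k]; ring
    have hsub : k - 1 - 1 = k - 2 := by omega
    rwa [hcast, hsub] at this
  have hcy' : HasDerivAt (fun s : ℝ => f (p.1, s))
      (p.1 ^ 2 + ((k : ℝ) - 1) * p.2 ^ (k - 2) - t) p.2 := by
    have := (((hasDerivAt_id p.2).const_mul (p.1 ^ 2)).add_const
      (2 * t * p.1 ^ 2)).add hpk |>.sub ((hasDerivAt_id p.2).const_mul t)
    refine (this.congr_deriv (by ring)).congr_of_eventuallyEq (Filter.Eventually.of_forall fun s => ?_)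
    simp only [hf, Pi.add_apply, Pi.sub_apply, id]
  have eq2 : p.1 ^ 2 + ((k : ℝ) - 1) * p.2 ^ (k - 2) - t = 0 := by
    have := hcy.unique hcy'
    rw [hD] at this
    simpa using this.symm
  exact nosol ⟨p.1, p.2, by linear_combination eq1, eq2⟩
end

section
/- Let k ≥ 5 be an odd natural number and let t be a real number with −((k−1)·2^(k−2))^(−1/(k−3)) < t < 0. Then the function f_t : ℝ² → ℝ defined by f_t(x,y) = x²y + 2t·x² + y^(k−1) − t·y has exactly one critical point, namely the point (0, y₀), where y₀ is the unique real number satisfying (k−1)·y₀^(k−2) = t (y₀ exists, is unique and is negative since k−2 is odd and t < 0). -/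
/-!
The gradient of `f_t` is `(2x(y + 2t), x² + (k-1)y^(k-2) - t)`. If `x ≠ 0`, the first component
forces `y = -2t > 0`, and then the second component is at least `-t > 0`, so every critical point
lies on the axis `x = 0`, where the second component vanishes exactly when
`(k-1)y^(k-2) = t`. Since `k - 2` is odd, `y ↦ y^(k-2)` is a strictly increasing bijection of `ℝ`,
which gives the unique (and negative) root `y₀`.
-/

open ContinuousLinearMap

theorem Odd.existsUnique_pow_eq {n : ℕ} (hn : Odd n) (a : ℝ) : ∃! y : ℝ, y ^ n = a := by
  have hn0 : n ≠ 0 := hn.pos.ne'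
  refine existsUnique_of_exists_of_unique ?_
    fun y z hy hz => hn.strictMono_pow.injective (hy.trans hz.symm)
  rcases le_or_gt 0 a with ha | ha
  · exact ⟨a ^ (n⁻¹ : ℝ), Real.rpow_inv_natCast_pow ha hn0⟩
  · refine ⟨-(-a) ^ (n⁻¹ : ℝ), ?_⟩
    rw [hn.neg_pow, Real.rpow_inv_natCast_pow (neg_nonneg.2 ha.le) hn0, neg_neg]

theorem smul_fst_add_smul_snd_eq_zero_iff {R : Type*} [CommSemiring R] [TopologicalSpace R]
    [ContinuousMul R] [ContinuousAdd R] (a b : R) :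
    a • fst R R R + b • snd R R R = 0 ↔ a = 0 ∧ b = 0 := by
  refine ⟨fun h => ⟨?_, ?_⟩, fun ⟨ha, hb⟩ => by simp [ha, hb]⟩
  · simpa using congr($h (1, 0))
  · simpa using congr($h (0, 1))

theorem hasFDerivAt_morsification (k : ℕ) (t : ℝ) (p : ℝ × ℝ) :
    HasFDerivAt (fun q : ℝ × ℝ => q.1 ^ 2 * q.2 + 2 * t * q.1 ^ 2 + q.2 ^ (k - 1) - t * q.2)
      ((2 * p.1 * (p.2 + 2 * t)) • fst ℝ ℝ ℝ
        + (p.1 ^ 2 + ((k - 1 : ℕ) : ℝ) * p.2 ^ (k - 2) - t) • snd ℝ ℝ ℝ) p := by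
  have hx : HasFDerivAt (fun q : ℝ × ℝ => q.1) (fst ℝ ℝ ℝ) p := hasFDerivAt_fst
  have hy : HasFDerivAt (fun q : ℝ × ℝ => q.2) (snd ℝ ℝ ℝ) p := hasFDerivAt_snd
  refine ((((hx.pow 2).mul hy).add ((hx.pow 2).const_mul (2 * t))).add (hy.pow (k - 1))).sub
    (hy.const_mul t) |>.congr_fderiv ?_
  ext <;>
    simp only [show k - 1 - 1 = k - 2 by omega, Nat.add_one_sub_one, pow_one, nsmul_eq_mul,
      Nat.cast_ofNat, sub_comp, add_comp, smul_comp, fst_comp_inl, snd_comp_inl, fst_comp_inr,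
      snd_comp_inr, smul_zero, zero_add, add_zero, sub_zero, sub_apply, add_apply, smul_apply,
      id_apply, smul_eq_mul, mul_one]
  ring

theorem morsification_critical_equations_iff {n : ℕ} {c t : ℝ} (hc : 0 ≤ c) (ht : t < 0)
    (x y : ℝ) :
    2 * x * (y + 2 * t) = 0 ∧ x ^ 2 + c * y ^ n - t = 0 ↔ x = 0 ∧ c * y ^ n = t := by
  refine ⟨fun ⟨hgx, hgy⟩ => ?_, fun ⟨hx, hy⟩ => ⟨by simp [hx], by simp [hx, hy]⟩⟩
  obtain hx | hy := mul_eq_zero.1 hgx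
  · have hx : x = 0 := by simpa using hx
    exact ⟨hx, by simp [hx] at hgy; linarith⟩
  · have hyn : 0 ≤ c * y ^ n := mul_nonneg hc (pow_nonneg (by linarith) n)
    exfalso
    linarith [sq_nonneg x]

theorem stmt_8_general (k : ℕ) (hk : 5 ≤ k) (hko : Odd k) (t : ℝ)
    (ht0 : t < 0) :
    (∃! y₀ : ℝ, ((k : ℝ) - 1) * y₀ ^ (k - 2) = t) ∧
    ∀ y₀ : ℝ, ((k : ℝ) - 1) * y₀ ^ (k - 2) = t →
      y₀ < 0 ∧
      ∀ p : ℝ × ℝ,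
        fderiv ℝ (fun q : ℝ × ℝ =>
          q.1 ^ 2 * q.2 + 2 * t * q.1 ^ 2 + q.2 ^ (k - 1) - t * q.2) p = 0 ↔
        p = (0, y₀) := by
  have hodd : Odd (k - 2) := Nat.Odd.sub_even (by omega) hko even_two
  have hc : (0 : ℝ) < k - 1 := by
    have : (5 : ℝ) ≤ k := by exact_mod_cast hk
    linarith
  have hroot (y : ℝ) : ((k : ℝ) - 1) * y ^ (k - 2) = t ↔ y ^ (k - 2) = t / (k - 1) := by
    rw [eq_div_iff hc.ne', mul_comm]
  refine ⟨by simpa only [hroot] using hodd.existsUnique_pow_eq _,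
    fun y₀ hy₀ => ⟨?_, fun p => ?_⟩⟩
  · rw [← hodd.pow_neg_iff, (hroot y₀).1 hy₀]
    exact div_neg_of_neg_of_pos ht0 hc
  · rw [(hasFDerivAt_morsification k t p).fderiv, smul_fst_add_smul_snd_eq_zero_iff,
      Nat.cast_pred (by omega : 0 < k),
      morsification_critical_equations_iff hc.le ht0, hroot, ← hroot y₀ |>.1 hy₀,
      hodd.strictMono_pow.injective.eq_iff]
    exact (Prod.ext_iff (y := (0, y₀))).symm

/-- For `k ≥ 5` odd and `-((k-1)*2^(k-2))^(-1/(k-3)) < t < 0`,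
the morsification `f_t (x,y) = x^2*y + 2*t*x^2 + y^(k-1) - t*y` of the
`D_k^+` curve singularity has exactly one critical point `(0, y₀)`, where
`y₀` is the unique real number with `(k-1)*y₀^(k-2) = t`; moreover `y₀` is
negative. -/
theorem stmt_8 (k : ℕ) (hk : 5 ≤ k) (hko : Odd k) (t : ℝ)
    (ht : -((((k : ℝ) - 1) * 2 ^ (k - 2)) ^ (-(1 / ((k : ℝ) - 3)))) < t)
    (ht0 : t < 0) :
    (∃! y₀ : ℝ, ((k : ℝ) - 1) * y₀ ^ (k - 2) = t) ∧
    ∀ y₀ : ℝ, ((k : ℝ) - 1) * y₀ ^ (k - 2) = t →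
      y₀ < 0 ∧
      ∀ p : ℝ × ℝ,
        fderiv ℝ (fun q : ℝ × ℝ =>
          q.1 ^ 2 * q.2 + 2 * t * q.1 ^ 2 + q.2 ^ (k - 1) - t * q.2) p = 0 ↔
        p = (0, y₀) :=
  stmt_8_general k hk hko t ht0
end

section
/- Let k ≥ 5 be an odd natural number, let t be a real number with −((k−1)·2^(k−2))^(−1/(k−3)) < t < 0, let f_t : ℝ² → ℝ be defined by f_t(x,y) = x²y + 2t·x² + y^(k−1) − t·y, and let y₀ be the unique real number with (k−1)·y₀^(k−2) = t. Then the Hessian matrix of f_t at the point (0, y₀) is the diagonal matrix with diagonal entries 2(y₀ + 2t) and (k−1)(k−2)·y₀^(k−3); the first entry is negative and the second is positive, so (0, y₀) is a nondegenerate critical point of Morse index 1. -/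
/-- The standard basis of `ℝ × ℝ`. -/
noncomputable def e2 : Fin 2 → ℝ × ℝ := ![(1, 0), (0, 1)]

/-- The Hessian matrix of `f : ℝ × ℝ → ℝ` at `p`: the `2 × 2` matrix of
second partial derivatives of `f` at `p`. -/
noncomputable def hessian (f : ℝ × ℝ → ℝ) (p : ℝ × ℝ) :
    Matrix (Fin 2) (Fin 2) ℝ :=
  Matrix.of fun i j => fderiv ℝ (fun q => fderiv ℝ f q (e2 j)) p (e2 i)

lemma hpow (n : ℕ) {f : ℝ × ℝ → ℝ} {f' : (ℝ × ℝ) →L[ℝ] ℝ} {q : ℝ × ℝ}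
    (hf : HasFDerivAt f f' q) :
    HasFDerivAt (fun p => f p ^ n) (((n : ℝ) * f q ^ (n - 1)) • f') q := by
  exact (hasDerivAt_pow n (f q)).comp_hasFDerivAt q hf

noncomputable def Lmap (t : ℝ) (k : ℕ) (q : ℝ × ℝ) : (ℝ × ℝ) →L[ℝ] ℝ :=
  (2 * q.1 * q.2 + 4 * t * q.1) • ContinuousLinearMap.fst ℝ ℝ ℝ +
  (q.1 ^ 2 + ((k : ℝ) - 1) * q.2 ^ (k - 2) - t) • ContinuousLinearMap.snd ℝ ℝ ℝ

lemma hasFDeriv_f (k : ℕ) (hk : 5 ≤ k) (t : ℝ) (q : ℝ × ℝ) :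
    HasFDerivAt (fun q : ℝ × ℝ =>
        q.1 ^ 2 * q.2 + 2 * t * q.1 ^ 2 + q.2 ^ (k - 1) - t * q.2)
      (Lmap t k q) q := by
  have h1 : HasFDerivAt (fun q : ℝ × ℝ => q.1) (ContinuousLinearMap.fst ℝ ℝ ℝ) q :=
    hasFDerivAt_fst
  have h2 : HasFDerivAt (fun q : ℝ × ℝ => q.2) (ContinuousLinearMap.snd ℝ ℝ ℝ) q :=
    hasFDerivAt_snd
  have hd := ((((hpow 2 h1).mul h2).add ((hpow 2 h1).const_mul (2*t))).add
      (hpow (k-1) h2)).sub (h2.const_mul t)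
  have e1 : k - 1 - 1 = k - 2 := by omega
  rw [e1, Nat.cast_sub (by omega : 1 ≤ k), Nat.cast_one] at hd
  convert hd using 1 <;> try rfl
  apply ContinuousLinearMap.ext
  intro v
  simp [Lmap]
  ring

lemma hasFDeriv_g0 (t : ℝ) (p : ℝ × ℝ) :
    HasFDerivAt (fun q : ℝ × ℝ => 2 * q.1 * q.2 + 4 * t * q.1)
      ((2 * p.2 + 4 * t) • ContinuousLinearMap.fst ℝ ℝ ℝ +
       (2 * p.1) • ContinuousLinearMap.snd ℝ ℝ ℝ) p := by
  have h1 : HasFDerivAt (fun q : ℝ × ℝ => q.1) (ContinuousLinearMap.fst ℝ ℝ ℝ) p :=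
    hasFDerivAt_fst
  have h2 : HasFDerivAt (fun q : ℝ × ℝ => q.2) (ContinuousLinearMap.snd ℝ ℝ ℝ) p :=
    hasFDerivAt_snd
  have hd := ((h1.const_mul 2).mul h2).add (h1.const_mul (4*t))
  convert hd using 1 <;> try rfl
  apply ContinuousLinearMap.ext
  intro v
  simp
  ring

lemma hasFDeriv_g1 (k : ℕ) (hk : 5 ≤ k) (t : ℝ) (p : ℝ × ℝ) :
    HasFDerivAt (fun q : ℝ × ℝ => q.1 ^ 2 + ((k : ℝ) - 1) * q.2 ^ (k - 2) - t)
      ((2 * p.1) • ContinuousLinearMap.fst ℝ ℝ ℝ +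
       (((k : ℝ) - 1) * ((k : ℝ) - 2) * p.2 ^ (k - 3)) • ContinuousLinearMap.snd ℝ ℝ ℝ) p := by
  have h1 : HasFDerivAt (fun q : ℝ × ℝ => q.1) (ContinuousLinearMap.fst ℝ ℝ ℝ) p :=
    hasFDerivAt_fst
  have h2 : HasFDerivAt (fun q : ℝ × ℝ => q.2) (ContinuousLinearMap.snd ℝ ℝ ℝ) p :=
    hasFDerivAt_snd
  have hd := ((hpow 2 h1).add ((hpow (k-2) h2).const_mul ((k:ℝ)-1))).sub_const t
  have e1 : k - 2 - 1 = k - 3 := by omega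
  rw [e1, Nat.cast_sub (by omega : 2 ≤ k)] at hd
  norm_num [-hasFDerivAt_sub_const_iff] at hd
  convert hd using 1 <;> try rfl
  apply ContinuousLinearMap.ext
  intro v
  simp
  ring


/-- For `k ≥ 5` odd, `-((k-1)*2^(k-2))^(-1/(k-3)) < t < 0` and
`y₀` the unique real with `(k-1)*y₀^(k-2) = t`, the Hessian of
`f_t (x,y) = x^2*y + 2*t*x^2 + y^(k-1) - t*y` at `(0, y₀)` is the diagonal
matrix `diag (2*(y₀ + 2*t), (k-1)*(k-2)*y₀^(k-3))`; the first entry is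
negative and the second positive, so `(0, y₀)` is a nondegenerate critical
point of Morse index `1`. -/
theorem stmt_9 (k : ℕ) (hk : 5 ≤ k) (hko : Odd k) (t : ℝ)
    (ht : -((((k : ℝ) - 1) * 2 ^ (k - 2)) ^ (-(1 / ((k : ℝ) - 3)))) < t)
    (ht0 : t < 0) (y₀ : ℝ) (hy₀ : ((k : ℝ) - 1) * y₀ ^ (k - 2) = t) :
    hessian (fun q : ℝ × ℝ =>
        q.1 ^ 2 * q.2 + 2 * t * q.1 ^ 2 + q.2 ^ (k - 1) - t * q.2) (0, y₀) =
      !![2 * (y₀ + 2 * t), 0;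
         0, ((k : ℝ) - 1) * ((k : ℝ) - 2) * y₀ ^ (k - 3)] ∧
    2 * (y₀ + 2 * t) < 0 ∧
    0 < ((k : ℝ) - 1) * ((k : ℝ) - 2) * y₀ ^ (k - 3) := by
  obtain ⟨m, hm⟩ := hko
  have hkR : (5 : ℝ) ≤ (k : ℝ) := by exact_mod_cast hk
  -- y₀ < 0
  have hy0neg : y₀ < 0 := by
    by_contra h
    push_neg at h
    have : (0 : ℝ) ≤ ((k : ℝ) - 1) * y₀ ^ (k - 2) :=
      mul_nonneg (by linarith) (pow_nonneg h _)
    rw [hy₀] at this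
    linarith
  have hodd2 : Odd (k - 2) := ⟨m - 1, by omega⟩
  have heven3 : Even (k - 3) := ⟨m - 1, by omega⟩
  have hpos3 : (0 : ℝ) < y₀ ^ (k - 3) := heven3.pow_pos hy0neg.ne
  refine ⟨?_, by linarith, mul_pos (mul_pos (by linarith) (by linarith)) hpos3⟩
  have key0 : (fun q : ℝ × ℝ => fderiv ℝ (fun q : ℝ × ℝ =>
        q.1 ^ 2 * q.2 + 2 * t * q.1 ^ 2 + q.2 ^ (k - 1) - t * q.2) q (e2 0)) =
      fun q : ℝ × ℝ => 2 * q.1 * q.2 + 4 * t * q.1 := by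
    funext q
    rw [(hasFDeriv_f k hk t q).fderiv]
    simp [Lmap, e2]
  have key1 : (fun q : ℝ × ℝ => fderiv ℝ (fun q : ℝ × ℝ =>
        q.1 ^ 2 * q.2 + 2 * t * q.1 ^ 2 + q.2 ^ (k - 1) - t * q.2) q (e2 1)) =
      fun q : ℝ × ℝ => q.1 ^ 2 + ((k : ℝ) - 1) * q.2 ^ (k - 2) - t := by
    funext q
    rw [(hasFDeriv_f k hk t q).fderiv]
    simp [Lmap, e2]
  have h00 : fderiv ℝ (fun q : ℝ × ℝ => fderiv ℝ (fun q : ℝ × ℝ =>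
        q.1 ^ 2 * q.2 + 2 * t * q.1 ^ 2 + q.2 ^ (k - 1) - t * q.2) q (e2 0))
        ((0 : ℝ), y₀) (e2 0) = 2 * (y₀ + 2 * t) := by
    rw [key0, (hasFDeriv_g0 t ((0 : ℝ), y₀)).fderiv]
    simp [e2]; ring
  have h10 : fderiv ℝ (fun q : ℝ × ℝ => fderiv ℝ (fun q : ℝ × ℝ =>
        q.1 ^ 2 * q.2 + 2 * t * q.1 ^ 2 + q.2 ^ (k - 1) - t * q.2) q (e2 0))
        ((0 : ℝ), y₀) (e2 1) = 0 := by
    rw [key0, (hasFDeriv_g0 t ((0 : ℝ), y₀)).fderiv]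
    simp [e2]
  have h01 : fderiv ℝ (fun q : ℝ × ℝ => fderiv ℝ (fun q : ℝ × ℝ =>
        q.1 ^ 2 * q.2 + 2 * t * q.1 ^ 2 + q.2 ^ (k - 1) - t * q.2) q (e2 1))
        ((0 : ℝ), y₀) (e2 0) = 0 := by
    rw [key1, (hasFDeriv_g1 k hk t ((0 : ℝ), y₀)).fderiv]
    simp [e2]
  have h11 : fderiv ℝ (fun q : ℝ × ℝ => fderiv ℝ (fun q : ℝ × ℝ =>
        q.1 ^ 2 * q.2 + 2 * t * q.1 ^ 2 + q.2 ^ (k - 1) - t * q.2) q (e2 1))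
        ((0 : ℝ), y₀) (e2 1) = ((k : ℝ) - 1) * ((k : ℝ) - 2) * y₀ ^ (k - 3) := by
    rw [key1, (hasFDeriv_g1 k hk t ((0 : ℝ), y₀)).fderiv]
    simp [e2]
  ext i j
  fin_cases i <;> fin_cases j <;>
    simp only [hessian, Matrix.of_apply, Matrix.cons_val', Matrix.cons_val_zero,
      Matrix.cons_val_one, Matrix.head_cons, Matrix.empty_val',
      Matrix.cons_val_fin_one, Matrix.head_fin_const]
  · exact h00
  · exact h01
  · exact h10
  · exact h11
end

section
/- Let k ≥ 5 be an odd natural number and let t be a real number with 0 < t ≤ 1. Then the function f_t : ℝ² → ℝ defined by f_t(x,y) = x²y − y^(k−1) + (k−1)·t·y has exactly one critical point, namely the point (0, t^(1/(k−2))). -/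
set_option maxHeartbeats 1000000


/-- For `k ≥ 5` odd and `0 < t ≤ 1`, the morsification
`f_t (x,y) = x^2*y - y^(k-1) + (k-1)*t*y` of the `D_k^-` curve singularity
has exactly one critical point, namely `(0, t^(1/(k-2)))`. -/
theorem stmt_10 (k : ℕ) (hk : 5 ≤ k) (hko : Odd k) (t : ℝ) (ht : 0 < t)
    (ht1 : t ≤ 1) :
    ∀ p : ℝ × ℝ,
      fderiv ℝ (fun q : ℝ × ℝ =>
        q.1 ^ 2 * q.2 - q.2 ^ (k - 1) + ((k : ℝ) - 1) * t * q.2) p = 0 ↔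
      p = (0, t ^ (1 / ((k : ℝ) - 2))) := by
  intro p
  have hk5 : (5:ℝ) ≤ (k:ℝ) := by exact_mod_cast hk
  have hden : ((k:ℝ) - 2) ≠ 0 := by linarith
  have hcast2 : ((k - 2 : ℕ) : ℝ) = (k:ℝ) - 2 := by
    have h2 : (2:ℕ) ≤ k := by omega
    push_cast [h2]; ring
  have hcast1 : ((k - 1 : ℕ) : ℝ) = (k:ℝ) - 1 := by
    have h1 : (1:ℕ) ≤ k := by omega
    push_cast [h1]; ring
  set y0 : ℝ := t ^ (1 / ((k : ℝ) - 2)) with hy0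
  have hy0pow : y0 ^ (k - 2) = t := by
    rw [hy0, ← Real.rpow_natCast (t ^ (1 / ((k:ℝ)-2))) (k-2),
      ← Real.rpow_mul ht.le, hcast2, one_div_mul_cancel hden, Real.rpow_one]
  have hkk : k - 1 - 1 = k - 2 := by omega
  have hodd : Odd (k - 2) := by
    obtain ⟨m, hm⟩ := hko
    exact ⟨m - 1, by omega⟩
  have hpow1 : HasFDerivAt (fun q : ℝ × ℝ => q.1 ^ 2)
      ((((2 : ℕ) : ℝ) * p.1 ^ (2 - 1)) • ContinuousLinearMap.fst ℝ ℝ ℝ) p :=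
    (hasDerivAt_pow 2 p.1).comp_hasFDerivAt p hasFDerivAt_fst
  have hpow2 : HasFDerivAt (fun q : ℝ × ℝ => q.2 ^ (k - 1))
      ((((k - 1 : ℕ) : ℝ) * p.2 ^ (k - 1 - 1)) • ContinuousLinearMap.snd ℝ ℝ ℝ) p :=
    (hasDerivAt_pow (k - 1) p.2).comp_hasFDerivAt p hasFDerivAt_snd
  have hD : HasFDerivAt (fun q : ℝ × ℝ =>
      q.1 ^ 2 * q.2 - q.2 ^ (k - 1) + ((k : ℝ) - 1) * t * q.2)
      ((((fun q : ℝ × ℝ => q.1 ^ 2) p) • ContinuousLinearMap.snd ℝ ℝ ℝ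
          + p.2 • ((((2 : ℕ) : ℝ) * p.1 ^ (2 - 1)) • ContinuousLinearMap.fst ℝ ℝ ℝ)
        - (((k - 1 : ℕ) : ℝ) * p.2 ^ (k - 1 - 1)) • ContinuousLinearMap.snd ℝ ℝ ℝ)
        + (((k : ℝ) - 1) * t) • ContinuousLinearMap.snd ℝ ℝ ℝ) p :=
    ((hpow1.mul hasFDerivAt_snd).sub hpow2).add
      (hasFDerivAt_snd.const_mul (((k : ℝ) - 1) * t))
  rw [hD.fderiv]
  constructor
  · intro h0
    have h1 : (2 : ℝ) * p.1 * p.2 = 0 := by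
      have := congrFun (congrArg DFunLike.coe h0) (1, 0)
      simp [ContinuousLinearMap.add_apply, ContinuousLinearMap.sub_apply,
        ContinuousLinearMap.smul_apply] at this
      rcases this with h | h <;> rw [h] <;> ring
    have h2 : p.1 ^ 2 - ((k:ℝ) - 1) * p.2 ^ (k - 2) + ((k:ℝ) - 1) * t = 0 := by
      have := congrFun (congrArg DFunLike.coe h0) (0, 1)
      simp [ContinuousLinearMap.add_apply, ContinuousLinearMap.sub_apply,
        ContinuousLinearMap.smul_apply, hkk, hcast1] at this
      linarith [this]
    have hy2 : p.2 ≠ 0 := by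
      intro hz
      rw [hz, zero_pow (by omega : k - 2 ≠ 0)] at h2
      nlinarith
    have hx : p.1 = 0 := by
      rcases mul_eq_zero.mp h1 with h | h
      · rcases mul_eq_zero.mp h with h' | h'
        · norm_num at h'
        · exact h'
      · exact absurd h hy2
    have hy : p.2 ^ (k - 2) = t := by
      rw [hx] at h2
      have hkn : ((k:ℝ) - 1) ≠ 0 := by linarith
      have h3 : ((k:ℝ) - 1) * (t - p.2 ^ (k - 2)) = 0 := by linear_combination h2
      rcases mul_eq_zero.mp h3 with h | h
      · exact absurd h hkn
      · linarith
    have : p.2 = y0 := hodd.strictMono_pow.injective (by rw [hy, hy0pow])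
    exact Prod.ext hx this
  · intro hp
    have hx : p.1 = 0 := by rw [hp]
    have hy : p.2 = y0 := by rw [hp]
    refine ContinuousLinearMap.ext fun v => ?_
    simp [ContinuousLinearMap.add_apply, ContinuousLinearMap.sub_apply,
      ContinuousLinearMap.smul_apply, hx, hy, hkk, hcast1, hy0pow]
end

section
/- Let k ≥ 4 be an even natural number and let t be a real number with 0 < t ≤ 1. Then the function f_t : ℝ² → ℝ defined by f_t(x,y) = x²y − y^(k−1) + (k−1)·t·y has exactly two critical points, namely (0, t^(1/(k−2))) and (0, −t^(1/(k−2))). -/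
/-- For `k ≥ 4` even and `0 < t ≤ 1`, the morsification
`f_t (x,y) = x^2*y - y^(k-1) + (k-1)*t*y` of the `D_k^-` curve singularity
has exactly two critical points, namely `(0, t^(1/(k-2)))` and
`(0, -t^(1/(k-2)))`. -/
theorem stmt_12 (k : ℕ) (hk : 4 ≤ k) (hke : Even k) (t : ℝ) (ht : 0 < t)
    (ht1 : t ≤ 1) :
    (∀ p : ℝ × ℝ,
      fderiv ℝ (fun q : ℝ × ℝ =>
        q.1 ^ 2 * q.2 - q.2 ^ (k - 1) + ((k : ℝ) - 1) * t * q.2) p = 0 ↔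
      (p = (0, t ^ (1 / ((k : ℝ) - 2))) ∨
       p = (0, -(t ^ (1 / ((k : ℝ) - 2)))))) ∧
    ((0, t ^ (1 / ((k : ℝ) - 2))) : ℝ × ℝ) ≠ (0, -(t ^ (1 / ((k : ℝ) - 2)))) := by
  have hk4 : (4:ℝ) ≤ (k:ℝ) := by exact_mod_cast hk
  have hc : ((k:ℝ) - 2) ≠ 0 := by linarith
  set r := t ^ (1 / ((k : ℝ) - 2)) with hrdef
  have hrpos : 0 < r := Real.rpow_pos_of_pos ht _
  have hcast : ((k - 2 : ℕ) : ℝ) = (k:ℝ) - 2 := by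
    have h2 : (2:ℕ) ≤ k := by omega
    push_cast [Nat.cast_sub h2]; ring
  have hcast1 : ((k - 1 : ℕ) : ℝ) = (k:ℝ) - 1 := by
    have h1 : (1:ℕ) ≤ k := by omega
    push_cast [Nat.cast_sub h1]; ring
  have hk1pos : (0:ℝ) < (k:ℝ) - 1 := by linarith
  have hrk : r ^ (k - 2) = t := by
    rw [← Real.rpow_natCast r (k-2), hcast, hrdef, ← Real.rpow_mul ht.le,
      one_div_mul_cancel hc, Real.rpow_one]
  have hne2 : k - 2 ≠ 0 := by omega
  have heven : Even (k - 2) := by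
    obtain ⟨m, hm⟩ := hke; exact ⟨m - 1, by omega⟩
  have hkk : k - 1 - 1 = k - 2 := by omega
  constructor
  · intro p
    have hD : HasFDerivAt (fun q : ℝ × ℝ =>
        q.1 ^ 2 * q.2 - q.2 ^ (k - 1) + ((k : ℝ) - 1) * t * q.2)
      (((p.1 ^ 2) • ContinuousLinearMap.snd ℝ ℝ ℝ +
          p.2 • (((2 : ℕ) : ℝ) * p.1 ^ (2 - 1)) • ContinuousLinearMap.fst ℝ ℝ ℝ
        - ((↑(k-1) : ℝ) * p.2 ^ (k - 1 - 1)) • ContinuousLinearMap.snd ℝ ℝ ℝ)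
        + (((k : ℝ) - 1) * t) • ContinuousLinearMap.snd ℝ ℝ ℝ) p := by
      have hx : HasFDerivAt (fun q : ℝ × ℝ => q.1) (ContinuousLinearMap.fst ℝ ℝ ℝ) p :=
        hasFDerivAt_fst
      have hy : HasFDerivAt (fun q : ℝ × ℝ => q.2) (ContinuousLinearMap.snd ℝ ℝ ℝ) p :=
        hasFDerivAt_snd
      have hx2 : HasFDerivAt (fun q : ℝ × ℝ => q.1 ^ 2)
          ((((2:ℕ):ℝ) * p.1 ^ (2-1)) • ContinuousLinearMap.fst ℝ ℝ ℝ) p :=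
        (hasDerivAt_pow 2 p.1).comp_hasFDerivAt p hx
      have hyk : HasFDerivAt (fun q : ℝ × ℝ => q.2 ^ (k-1))
          (((↑(k-1):ℝ) * p.2 ^ (k-1-1)) • ContinuousLinearMap.snd ℝ ℝ ℝ) p :=
        (hasDerivAt_pow (k-1) p.2).comp_hasFDerivAt p hy
      exact ((hx2.mul hy).sub hyk).add (hy.const_mul (((k:ℝ)-1)*t))
    rw [hD.fderiv]
    constructor
    · intro h0
      have h1 := congrArg (fun L : ℝ × ℝ →L[ℝ] ℝ => L (1, 0)) h0
      have h2 := congrArg (fun L : ℝ × ℝ →L[ℝ] ℝ => L (0, 1)) h0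
      simp only [ContinuousLinearMap.add_apply, ContinuousLinearMap.sub_apply,
        ContinuousLinearMap.smul_apply, ContinuousLinearMap.coe_fst',
        ContinuousLinearMap.coe_snd', ContinuousLinearMap.zero_apply,
        smul_eq_mul] at h1 h2
      rw [hkk, hcast1] at h2
      have h2' : p.1 ^ 2 - ((k:ℝ) - 1) * p.2 ^ (k - 2) + ((k:ℝ) - 1) * t = 0 := by
        linarith [h2]
      have h1' : p.2 * (2 * p.1) = 0 := by
        push_cast at h1; linarith [h1]
      rcases mul_eq_zero.mp h1' with hy0 | hx0
      · exfalso
        rw [hy0, zero_pow hne2] at h2'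
        nlinarith
      · have hx0 : p.1 = 0 := by linarith [mul_eq_zero.mp hx0]
        rw [hx0, zero_pow (by norm_num : (2:ℕ) ≠ 0)] at h2'
        have hyt : p.2 ^ (k - 2) = t := by
          have := mul_left_cancel₀ (ne_of_gt hk1pos)
            (show ((k:ℝ)-1) * p.2 ^ (k-2) = ((k:ℝ)-1) * t by linarith)
          exact this
        have habs : |p.2| = r := by
          refine (pow_left_strictMonoOn₀ hne2).injOn (by exact abs_nonneg p.2) (by exact hrpos.le) ?_
          rw [heven.pow_abs, hyt, hrk]
        rcases abs_eq hrpos.le |>.mp habs with h | h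
        · left; exact Prod.ext hx0 h
        · right; exact Prod.ext hx0 h
    · have hnrk : (-r) ^ (k - 2) = t := by rw [heven.neg_pow, hrk]
      rintro (rfl | rfl) <;>
        refine ContinuousLinearMap.ext fun v => ?_ <;>
        simp only [ContinuousLinearMap.add_apply, ContinuousLinearMap.sub_apply,
          ContinuousLinearMap.smul_apply, ContinuousLinearMap.coe_fst',
          ContinuousLinearMap.coe_snd', ContinuousLinearMap.zero_apply,
          smul_eq_mul, hkk, hcast1]
      · linear_combination (-(((k:ℝ) - 1) * v.2)) * hrk
      · linear_combination (-(((k:ℝ) - 1) * v.2)) * hnrk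
  · intro h
    have h2 := congrArg Prod.snd h
    simp only at h2
    linarith
end

section
/- Let t be a real number with 0 < t ≤ 1. Then the function f_t : ℝ² → ℝ defined by f_t(x,y) = x³ + 3t·x + x·y³ + t·y³ has exactly one critical point, namely p(t) = (−t, −(3(t² + t))^(1/3)); that is, the gradient (3(x² + t) + y³, 3y²(x + t)) vanishes at (x,y) if and only if x = −t and y³ = −3(t² + t). -/
/-- For `0 < t ≤ 1`, the morsification
`f_t (x,y) = x^3 + 3*t*x + x*y^3 + t*y^3` of the `E_7` curve singularity has
exactly one critical point `p(t) = (-t, -(3*(t^2 + t))^(1/3))`; that is, the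
gradient `(3*(x^2 + t) + y^3, 3*y^2*(x + t))` vanishes at `(x,y)` iff
`x = -t` and `y^3 = -3*(t^2 + t)`. -/
theorem stmt_16 (t : ℝ) (ht : 0 < t) (ht1 : t ≤ 1) :
    (∀ p : ℝ × ℝ,
      fderiv ℝ (fun q : ℝ × ℝ =>
        q.1 ^ 3 + 3 * t * q.1 + q.1 * q.2 ^ 3 + t * q.2 ^ 3) p = 0 ↔
      p = (-t, -((3 * (t ^ 2 + t)) ^ ((1 : ℝ) / 3)))) ∧
    (∀ x y : ℝ,
      (3 * (x ^ 2 + t) + y ^ 3 = 0 ∧ 3 * y ^ 2 * (x + t) = 0) ↔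
      (x = -t ∧ y ^ 3 = -(3 * (t ^ 2 + t)))) := by
  have h3t : (0:ℝ) < 3 * (t ^ 2 + t) := by positivity
  set c : ℝ := -((3 * (t ^ 2 + t)) ^ ((1:ℝ)/3)) with hc
  have hc3 : c ^ 3 = -(3 * (t ^ 2 + t)) := by
    rw [hc, neg_pow, ← Real.rpow_natCast ((3 * (t^2+t)) ^ ((1:ℝ)/3)) 3,
      ← Real.rpow_mul h3t.le]
    norm_num
  have part2 : ∀ x y : ℝ,
      (3 * (x ^ 2 + t) + y ^ 3 = 0 ∧ 3 * y ^ 2 * (x + t) = 0) ↔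
      (x = -t ∧ y ^ 3 = -(3 * (t ^ 2 + t))) := by
    intro x y
    constructor
    · rintro ⟨h1, h2⟩
      have hy : y ≠ 0 := by
        rintro rfl; simp at h1; nlinarith [sq_nonneg x]
      have hxt : x + t = 0 := by
        rcases mul_eq_zero.mp h2 with h | h
        · exact absurd (by linarith : y ^ 2 = 0) (pow_ne_zero _ hy)
        · exact h
      have hx : x = -t := by linarith
      subst hx
      exact ⟨rfl, by nlinarith⟩
    · rintro ⟨rfl, hy⟩
      constructor <;> nlinarith
  refine ⟨?_, part2⟩
  intro p
  have hA : HasFDerivAt (fun q : ℝ × ℝ =>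
      q.1 ^ 3 + 3 * t * q.1 + q.1 * q.2 ^ 3 + t * q.2 ^ 3)
      ((3 * p.1 ^ 2 + 3 * t + p.2 ^ 3) • (ContinuousLinearMap.fst ℝ ℝ ℝ)
        + (3 * p.2 ^ 2 * (p.1 + t)) • (ContinuousLinearMap.snd ℝ ℝ ℝ)) p := by
    have h1 : HasFDerivAt (fun q : ℝ × ℝ => q.1) (ContinuousLinearMap.fst ℝ ℝ ℝ) p :=
      hasFDerivAt_fst
    have h2 : HasFDerivAt (fun q : ℝ × ℝ => q.2) (ContinuousLinearMap.snd ℝ ℝ ℝ) p :=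
      hasFDerivAt_snd
    have hp1 : HasFDerivAt (fun q : ℝ × ℝ => q.1 ^ 3)
        ((3 * p.1 ^ 2) • (ContinuousLinearMap.fst ℝ ℝ ℝ)) p := by
      have := (hasDerivAt_pow 3 p.1).comp_hasFDerivAt p h1
      simpa [Function.comp_def] using this
    have hp2 : HasFDerivAt (fun q : ℝ × ℝ => q.2 ^ 3)
        ((3 * p.2 ^ 2) • (ContinuousLinearMap.snd ℝ ℝ ℝ)) p := by
      have := (hasDerivAt_pow 3 p.2).comp_hasFDerivAt p h2
      simpa [Function.comp_def] using this
    have := ((hp1.add ((hasFDerivAt_const (3 * t) p).mul h1)).add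
        (h1.mul hp2)).add ((hasFDerivAt_const t p).mul hp2)
    refine this.congr_fderiv ?_
    refine ContinuousLinearMap.ext fun v => ?_
    simp
    ring
  rw [hA.fderiv]
  constructor
  · intro h
    have e1 : 3 * p.1 ^ 2 + 3 * t + p.2 ^ 3 = 0 := by
      have := congrArg (fun L : ℝ × ℝ →L[ℝ] ℝ => L (1, 0)) h
      simpa using this
    have e2 : 3 * p.2 ^ 2 * (p.1 + t) = 0 := by
      have := congrArg (fun L : ℝ × ℝ →L[ℝ] ℝ => L (0, 1)) h
      simpa using this
    obtain ⟨hx, hy3⟩ := (part2 p.1 p.2).mp ⟨by linarith, e2⟩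
    have hyc : p.2 = c := by
      have : p.2 ^ 3 = c ^ 3 := by rw [hy3, hc3]
      have hodd : Odd 3 := by decide
      have hinj : Function.Injective (fun a : ℝ => a ^ 3) :=
        hodd.strictMono_pow.injective
      exact hinj this
    exact Prod.ext hx hyc
  · intro h
    rw [h]
    have e1 : 3 * (-t) ^ 2 + 3 * t + c ^ 3 = 0 := by rw [hc3]; ring
    have e2 : 3 * c ^ 2 * (-t + t) = 0 := by ring
    simp only [e1, e2]
    simp
end
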